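/- For any finite simple graph G with average degree d, f(G) ≥ √d; that is, every edge-ordering of G contains an increasing path of length at least √d. -/

import Mathlib

open SimpleGraph

variable {V : Type*} [Fintype V]

/-- An edge-ordering of `G`: a bijection from the edge set onto `{1, ..., |E(G)|}`. -/
def IsEdgeOrdering (G : SimpleGraph V) (φ : Sym2 V → ℕ) : Prop :=
  Set.BijOn φ G.edgeSet (Set.Icc 1 G.edgeSet.ncard)

/-- `G` has an increasing path of length `ℓ` with respect to the labelling `φ`. -/
def HasIncPath (G : SimpleGraph V) (φ : Sym2 V → ℕ) (ℓ : ℕ) : Prop :=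
  ∃ (u v : V) (p : G.Walk u v), p.IsPath ∧ List.Chain' (· < ·) (p.edges.map φ) ∧ p.length = ℓ

/-- `ψ(G, φ)`: the length of the longest increasing path under `φ`. -/
noncomputable def psi (G : SimpleGraph V) (φ : Sym2 V → ℕ) : ℕ :=
  sSup {ℓ | HasIncPath G φ ℓ}

/-- `f(G)`: the minimum over all edge-orderings of the longest increasing path length. -/
noncomputable def incf (G : SimpleGraph V) : ℕ :=
  sInf {m | ∃ φ : Sym2 V → ℕ, IsEdgeOrdering G φ ∧ psi G φ = m}

/-!
For a labelling `φ` that is injective on the edges and an edge `uv`, let `x(u → v)` be the length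
of a longest increasing path whose last edge goes from `u` to `v`. Every edge hands a weight of
`2` to its endpoints: all of it to `v` if `x(u → v) > x(v → u)`, one to each endpoint on a tie.

Fix a vertex `v` and a level `s`, and let `F` be the neighbours `u` with `x(u → v) = s` that
hand positive weight to `v`, i.e. with `x(v → u) ≤ s`. Let `u₁ ∈ F` have the smallest label on
`u₁v` and let `P` be a longest increasing path ending with `u₁ → v`; it has `s` vertices besides
`v`. Any other `u ∈ F` lies on `P`, otherwise `P` followed by `v → u` would give `x(v → u) > s`.
If the first vertex `z` of `P` is in `F`, moving it to the end of `P` gives `x(v → z) ≥ s`, so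
`z` hands only weight `1` to `v`. Hence level `s` hands at most `2s - 1` to `v`, all levels
together at most `∑_{s ≤ ψ} (2s - 1) = ψ²`, and so `2|E| ≤ |V| ψ²`.
-/

open Finset

/-- An increasing path of length `ℓ` whose last edge goes from `u` to `v`, recorded by its
reversal `v, u, …` (a path with decreasing labels), since walks are built from the front. -/
def HasIncPathInto (G : SimpleGraph V) (φ : Sym2 V → ℕ) (u v : V) (ℓ : ℕ) : Prop :=
  ∃ (t : V) (h : G.Adj v u) (q : G.Walk u t),
    (Walk.cons h q).IsPath ∧ ((Walk.cons h q).edges.map φ).IsChain (· > ·) ∧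
      (Walk.cons h q).length = ℓ

noncomputable def longestIncInto (G : SimpleGraph V) (φ : Sym2 V → ℕ) (u v : V) : ℕ :=
  sSup {ℓ | HasIncPathInto G φ u v ℓ}

noncomputable def arcWeight (G : SimpleGraph V) (φ : Sym2 V → ℕ) (u v : V) : ℕ :=
  if longestIncInto G φ v u < longestIncInto G φ u v then 2
  else if longestIncInto G φ u v < longestIncInto G φ v u then 0 else 1

section

omit [Fintype V]

variable {G : SimpleGraph V} {φ : Sym2 V → ℕ}

lemma hasIncPathInto_one {u v : V} (h : G.Adj v u) : HasIncPathInto G φ u v 1 :=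
  ⟨u, h, Walk.nil, by simp [h.ne], List.isChain_singleton _, rfl⟩

lemma HasIncPathInto.hasIncPath {u v : V} {ℓ : ℕ} (h : HasIncPathInto G φ u v ℓ) :
    HasIncPath G φ ℓ := by
  obtain ⟨t, h, q, hp, hc, rfl⟩ := h
  refine ⟨t, v, (Walk.cons h q).reverse, hp.reverse, ?_, Walk.length_reverse _⟩
  rw [Walk.edges_reverse, List.map_reverse]
  exact List.isChain_reverse.mpr hc

lemma hasIncPathInto_cons {v u₁ u t : V} (hu : G.Adj v u) (h : G.Adj v u₁) (q : G.Walk u₁ t)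
    (hp : (Walk.cons h q).IsPath) (hc : ((Walk.cons h q).edges.map φ).IsChain (· > ·))
    (hu_supp : u ∉ (Walk.cons h q).support) (hlt : φ s(v, u₁) < φ s(u, v)) :
    HasIncPathInto G φ v u ((Walk.cons h q).length + 1) := by
  refine ⟨t, hu.symm, Walk.cons h q, Walk.cons_isPath_iff _ _ |>.mpr ⟨hp, hu_supp⟩, ?_, rfl⟩
  simp only [Walk.edges_cons, List.map_cons] at hc ⊢
  exact List.isChain_cons_cons.mpr ⟨hlt, hc⟩

/-- Moving the last vertex `z` of a decreasing path from `v` to its front. -/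
lemma hasIncPathInto_rotate {v u₁ z : V} (h : G.Adj v u₁) (q : G.Walk u₁ z)
    (hp : (Walk.cons h q).IsPath) (hc : ((Walk.cons h q).edges.map φ).IsChain (· > ·))
    (hz : G.Adj v z) (hlt : φ s(v, u₁) < φ s(z, v)) :
    HasIncPathInto G φ v z (Walk.cons h q).length := by
  set D : G.Walk v z := Walk.cons h q with hD
  obtain ⟨w, hzw, R, hR⟩ := Walk.exists_eq_cons_of_ne hz.ne' D.reverse
  have hRpath : R.IsPath ∧ z ∉ R.support := by
    simpa [hR] using hp.reverse
  have hDedges : D.edges = R.edges.reverse ++ [s(z, w)] := by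
    rw [← List.reverse_reverse D.edges, ← Walk.edges_reverse, hR, Walk.edges_cons,
      List.reverse_cons]
  have hpw : (D.edges.map φ).Pairwise (· > ·) := List.isChain_iff_pairwise.mp hc
  have hsub : (R.reverse.edges.map φ).Sublist (D.edges.map φ) := by
    rw [Walk.edges_reverse, hDedges]
    exact (List.sublist_append_left _ _).map φ
  have hhead : ∀ b ∈ D.edges.map φ, b ≤ φ s(v, u₁) := by
    intro b hb
    rw [hD, Walk.edges_cons, List.map_cons] at hb hpw
    rcases List.mem_cons.mp hb with rfl | hb
    exacts [le_rfl, ((List.pairwise_cons.mp hpw).1 b hb).le]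
  refine ⟨w, hz.symm, R.reverse, ?_, ?_, ?_⟩
  · exact Walk.cons_isPath_iff _ _ |>.mpr ⟨hRpath.1.reverse, by simpa using hRpath.2⟩
  · rw [Walk.edges_cons, List.map_cons, List.isChain_iff_pairwise, List.pairwise_cons]
    exact ⟨fun b hb => (hhead b (hsub.mem hb)).trans_lt hlt, hpw.sublist hsub⟩
  · simpa using (congrArg Walk.length hR).symm

lemma arcWeight_le_two (u v : V) : arcWeight G φ u v ≤ 2 := by
  unfold arcWeight; split_ifs <;> omega

lemma arcWeight_add_arcWeight (u v : V) : arcWeight G φ u v + arcWeight G φ v u = 2 := by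
  unfold arcWeight; split_ifs <;> omega

lemma arcWeight_ne_zero_iff {u v : V} :
    arcWeight G φ u v ≠ 0 ↔ longestIncInto G φ v u ≤ longestIncInto G φ u v := by
  unfold arcWeight; split_ifs <;> omega

lemma arcWeight_eq_one {u v : V} (h : longestIncInto G φ u v = longestIncInto G φ v u) :
    arcWeight G φ u v = 1 := by
  simp [arcWeight, h]

lemma label_ne_of_ne (hφ : Set.InjOn φ G.edgeSet) {u u' v : V} (hu : G.Adj v u)
    (hu' : G.Adj v u') (hne : u ≠ u') : φ s(u, v) ≠ φ s(u', v) :=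
  fun heq => hne (Sym2.congr_left.mp (hφ hu.symm hu'.symm heq))

end

section

variable {G : SimpleGraph V} {φ : Sym2 V → ℕ}

lemma bddAbove_hasIncPath : BddAbove {ℓ | HasIncPath G φ ℓ} :=
  ⟨Fintype.card V, fun _ ⟨_, _, _, hp, _, hlen⟩ => hlen ▸ hp.length_lt.le⟩

lemma bddAbove_hasIncPathInto (u v : V) : BddAbove {ℓ | HasIncPathInto G φ u v ℓ} :=
  ⟨Fintype.card V, fun _ ⟨_, _, _, hp, _, hlen⟩ => hlen ▸ hp.length_lt.le⟩

lemma HasIncPathInto.le_longestIncInto {u v : V} {ℓ : ℕ} (h : HasIncPathInto G φ u v ℓ) :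
    ℓ ≤ longestIncInto G φ u v :=
  le_csSup (bddAbove_hasIncPathInto u v) h

lemma one_le_longestIncInto {u v : V} (h : G.Adj v u) : 1 ≤ longestIncInto G φ u v :=
  (hasIncPathInto_one h).le_longestIncInto

lemma mem_support_of_longestIncInto_le {v u₁ u t : V} (hu : G.Adj v u) (h : G.Adj v u₁)
    (q : G.Walk u₁ t) (hp : (Walk.cons h q).IsPath)
    (hc : ((Walk.cons h q).edges.map φ).IsChain (· > ·)) (hlt : φ s(v, u₁) < φ s(u, v))
    (hle : longestIncInto G φ v u ≤ (Walk.cons h q).length) : u ∈ q.support := by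
  by_contra hq
  have hu_supp : u ∉ (Walk.cons h q).support := by simp [hu.ne', hq]
  have := (hasIncPathInto_cons hu h q hp hc hu_supp hlt).le_longestIncInto
  omega

lemma hasIncPathInto_longestIncInto {u v : V} (h : G.Adj v u) :
    HasIncPathInto G φ u v (longestIncInto G φ u v) :=
  Nat.sSup_mem ⟨1, hasIncPathInto_one h⟩ (bddAbove_hasIncPathInto u v)

lemma longestIncInto_le_psi {u v : V} (h : G.Adj v u) : longestIncInto G φ u v ≤ psi G φ :=
  csSup_le ⟨1, hasIncPathInto_one h⟩ fun _ hℓ => le_csSup bddAbove_hasIncPath hℓ.hasIncPath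

end

lemma sum_le_two_mul_card_sub_one {ι : Type*} [DecidableEq ι] {F S : Finset ι} {f : ι → ℕ}
    {z : ι} (hFS : F ⊆ S) (hz : z ∈ S) (hf : ∀ i ∈ F, f i ≤ 2) (hfz : z ∈ F → f z ≤ 1) :
    ∑ i ∈ F, f i ≤ 2 * #S - 1 := by
  have hS : 1 ≤ #S := card_pos.mpr ⟨z, hz⟩
  calc ∑ i ∈ F, f i ≤ ∑ i ∈ F, if i = z then 1 else 2 :=
        sum_le_sum fun i hi => by split_ifs with h; exacts [h ▸ hfz (h ▸ hi), hf i hi]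
    _ ≤ ∑ i ∈ S, if i = z then 1 else 2 := sum_le_sum_of_subset hFS
    _ = 1 + ∑ i ∈ S.erase z, if i = z then 1 else 2 := by rw [← add_sum_erase S _ hz, if_pos rfl]
    _ = 2 * #S - 1 := by
        rw [sum_congr rfl fun i hi => if_neg (ne_of_mem_erase hi), sum_const, card_erase_of_mem hz,
          smul_eq_mul]
        omega

lemma sum_Icc_two_mul_sub_one (k : ℕ) : ∑ s ∈ Icc 1 k, (2 * s - 1) = k ^ 2 := by
  induction k with
  | zero => simp
  | succ k ih =>
    rw [sum_Icc_succ_top (by omega), ih]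
    ring_nf
    omega

lemma sum_sum_neighborFinset_eq_mul_ncard_edgeSet {G : SimpleGraph V} [DecidableRel G.Adj]
    (f : V → V → ℕ) {c : ℕ} (hf : ∀ u v, G.Adj u v → f u v + f v u = c) :
    ∑ v, ∑ u ∈ G.neighborFinset v, f u v = c * G.edgeSet.ncard := by
  classical
  have hswap : ∑ v, ∑ u ∈ G.neighborFinset v, f v u = ∑ v, ∑ u ∈ G.neighborFinset v, f u v :=
    sum_comm' fun u v => by simp [G.adj_comm]
  have htotal : ∑ v, ∑ u ∈ G.neighborFinset v, (f u v + f v u) = 2 * (c * G.edgeSet.ncard) := by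
    calc ∑ v, ∑ u ∈ G.neighborFinset v, (f u v + f v u) = ∑ v, ∑ _u ∈ G.neighborFinset v, c :=
          sum_congr rfl fun v _ => sum_congr rfl fun u hu =>
            add_comm (f u v) _ ▸ hf v u ((mem_neighborFinset G v u).mp hu)
      _ = c * ∑ v, G.degree v := by simp [mul_sum, mul_comm]
      _ = 2 * (c * G.edgeSet.ncard) := by
          rw [sum_degrees_eq_twice_card_edges, ← coe_edgeFinset, Set.ncard_coe_finset]
          ring
  rw [sum_congr rfl fun v _ => sum_add_distrib, sum_add_distrib, hswap] at htotal
  omega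

section

variable {G : SimpleGraph V} {φ : Sym2 V → ℕ} [DecidableRel G.Adj]

lemma sum_arcWeight_filter_le (hφ : Set.InjOn φ G.edgeSet) (v : V) (s : ℕ) :
    ∑ u ∈ G.neighborFinset v with longestIncInto G φ u v = s, arcWeight G φ u v ≤ 2 * s - 1 := by
  classical
  rw [← sum_filter_ne_zero]
  set F := ({u ∈ G.neighborFinset v | longestIncInto G φ u v = s} : Finset V).filter
    (arcWeight G φ · v ≠ 0)
  have hF : ∀ {u}, u ∈ F ↔
      G.Adj v u ∧ longestIncInto G φ u v = s ∧ longestIncInto G φ v u ≤ s := by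
    intro u
    simp only [F, mem_filter, mem_neighborFinset, arcWeight_ne_zero_iff]
    grind
  obtain hFempty | hFne := F.eq_empty_or_nonempty
  · simp [hFempty]
  obtain ⟨u₁, hu₁, hmin⟩ := F.exists_min_image (φ s(·, v)) hFne
  obtain ⟨hadj₁, hx₁, -⟩ := hF.mp hu₁
  obtain ⟨z, h, q, hp, hc, hlen⟩ := hasIncPathInto_longestIncInto (φ := φ) hadj₁
  rw [hx₁] at hlen
  have hlabel : ∀ u ∈ F, u ≠ u₁ → φ s(v, u₁) < φ s(u, v) := by
    intro u hu hne
    rw [Sym2.eq_swap (a := v)]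
    exact (hmin u hu).lt_of_ne (label_ne_of_ne hφ hadj₁ (hF.mp hu).1 (Ne.symm hne))
  have hsupp : F ⊆ q.support.toFinset := by
    intro u hu
    rw [List.mem_toFinset]
    by_cases hne : u = u₁
    · exact hne ▸ q.start_mem_support
    obtain ⟨hadj, -, hle⟩ := hF.mp hu
    exact mem_support_of_longestIncInto_le hadj h q hp hc (hlabel u hu hne) (hlen ▸ hle)
  have hz : z ∈ F → arcWeight G φ z v ≤ 1 := by
    intro hzF
    obtain ⟨hadjz, hxz, hle⟩ := hF.mp hzF
    suffices s ≤ longestIncInto G φ v z from (arcWeight_eq_one (by omega)).le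
    by_cases hzu : z = u₁
    · subst hzu
      have hq : q = Walk.nil := congrArg Subtype.val (Path.loop_eq ⟨q, hp.of_cons⟩)
      subst hq
      exact hlen ▸ one_le_longestIncInto hadjz.symm
    · exact hlen ▸ (hasIncPathInto_rotate h q hp hc hadjz (hlabel z hzF hzu)).le_longestIncInto
  calc ∑ u ∈ F, arcWeight G φ u v ≤ 2 * #q.support.toFinset - 1 :=
        sum_le_two_mul_card_sub_one hsupp (List.mem_toFinset.mpr q.end_mem_support)
          (fun _ _ => arcWeight_le_two _ _) hz
    _ = 2 * s - 1 := by
        rw [List.toFinset_card_of_nodup hp.of_cons.support_nodup, Walk.length_support, ← hlen,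
          Walk.length_cons]

lemma sum_arcWeight_le_psi_sq (hφ : Set.InjOn φ G.edgeSet) (v : V) :
    ∑ u ∈ G.neighborFinset v, arcWeight G φ u v ≤ psi G φ ^ 2 := by
  have hmaps : ∀ u ∈ G.neighborFinset v, longestIncInto G φ u v ∈ Icc 1 (psi G φ) :=
    fun u hu => mem_Icc.mpr ⟨one_le_longestIncInto ((mem_neighborFinset G v u).mp hu),
      longestIncInto_le_psi ((mem_neighborFinset G v u).mp hu)⟩
  calc ∑ u ∈ G.neighborFinset v, arcWeight G φ u v
      = ∑ s ∈ Icc 1 (psi G φ), ∑ u ∈ G.neighborFinset v with longestIncInto G φ u v = s,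
          arcWeight G φ u v := (sum_fiberwise_of_maps_to hmaps _).symm
    _ ≤ ∑ s ∈ Icc 1 (psi G φ), (2 * s - 1) := sum_le_sum fun s _ => sum_arcWeight_filter_le hφ v s
    _ = psi G φ ^ 2 := sum_Icc_two_mul_sub_one _

end

lemma two_mul_ncard_edgeSet_le_card_mul_psi_sq {G : SimpleGraph V} {φ : Sym2 V → ℕ}
    (hφ : Set.InjOn φ G.edgeSet) : 2 * G.edgeSet.ncard ≤ Fintype.card V * psi G φ ^ 2 := by
  classical
  calc 2 * G.edgeSet.ncard = ∑ v, ∑ u ∈ G.neighborFinset v, arcWeight G φ u v :=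
        (sum_sum_neighborFinset_eq_mul_ncard_edgeSet _ fun u v _ =>
          arcWeight_add_arcWeight u v).symm
    _ ≤ ∑ _v : V, psi G φ ^ 2 := sum_le_sum fun v _ => sum_arcWeight_le_psi_sq hφ v
    _ = Fintype.card V * psi G φ ^ 2 := by rw [sum_const, card_univ, smul_eq_mul]

lemma exists_isEdgeOrdering (G : SimpleGraph V) : ∃ φ : Sym2 V → ℕ, IsEdgeOrdering G φ :=
  G.edgeSet.toFinite.exists_bijOn_of_encard_eq <| by
    rw [← G.edgeSet.toFinite.cast_ncard_eq, ← (Set.finite_Icc _ _).cast_ncard_eq, Set.ncard_Icc_nat]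
    simp

/-- Every graph with average degree `d` satisfies `f(G) ≥ √d`. -/
theorem incf_ge_sqrt_avg_degree (G : SimpleGraph V) :
    Real.sqrt (2 * (G.edgeSet.ncard : ℝ) / (Fintype.card V : ℝ)) ≤ (incf G : ℝ) := by
  obtain ⟨φ₀, hφ₀⟩ := exists_isEdgeOrdering G
  obtain ⟨φ, hφ, hψ⟩ : incf G ∈ {m | ∃ φ, IsEdgeOrdering G φ ∧ psi G φ = m} :=
    Nat.sInf_mem ⟨_, φ₀, hφ₀, rfl⟩
  have hbound : 2 * (G.edgeSet.ncard : ℝ) ≤ Fintype.card V * (incf G : ℝ) ^ 2 := by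
    exact_mod_cast hψ ▸ two_mul_ncard_edgeSet_le_card_mul_psi_sq hφ.injOn
  refine Real.sqrt_le_iff.mpr ⟨by positivity, div_le_of_le_mul₀ (by positivity) (by positivity) ?_⟩
  linarith
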